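/- Let S be a supercharacter theory of a finite group G and let g ∈ G. Then g is an S-Camina element if and only if for every z ∈ [G,S] there exists y ∈ Cl_S(g) with g⁻¹y = z. -/

import Mathlib

open scoped BigOperators Pointwise

/-- `f : G → ℂ` is an irreducible character of `G`. -/
def IsIrrChar (G : Type) [Group G] [Fintype G] (f : G → ℂ) : Prop :=
  ∃ V : FDRep ℂ G, CategoryTheory.Simple V ∧ V.character = f

/-- A supercharacter theory of a finite group `G` (Diaconis–Isaacs): a partition
`parts` of the set of irreducible characters of `G` together with a partition of `G`
into `S`-classes (`cls g` is the class of `g`), such that `{1}` is a class, the number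
of parts equals the number of classes, and each supercharacter
`σ_X = ∑ χ ∈ X, χ(1)·χ` is constant on every class. -/
structure SCT (G : Type) [Group G] [Fintype G] where
  parts : Finset (Finset (G → ℂ))
  cls : G → Set G
  parts_cover : ∀ f : G → ℂ, IsIrrChar G f ↔ ∃ X ∈ parts, f ∈ X
  parts_disj : ∀ X ∈ parts, ∀ Y ∈ parts, X ≠ Y → Disjoint X Y
  parts_nonempty : ∀ X ∈ parts, X.Nonempty
  mem_cls : ∀ g : G, g ∈ cls g
  cls_eq : ∀ g h : G, h ∈ cls g → cls h = cls g
  cls_one : cls (1 : G) = {1}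
  card_eq : parts.card = Nat.card (Set.range cls)
  const : ∀ X ∈ parts, ∀ g h : G, h ∈ cls g →
    (∑ χ ∈ X, χ 1 * χ h) = (∑ χ ∈ X, χ 1 * χ g)

variable {G : Type} [Group G] [Fintype G]

namespace SCT

/-- The supercharacter attached to a part `X`. -/
noncomputable def superchar (_S : SCT G) (X : Finset (G → ℂ)) : G → ℂ := fun g => ∑ χ ∈ X, χ 1 * χ g

/-- The set `Irr(S)` of `S`-characters. -/
def Irr (S : SCT G) : Set (G → ℂ) := {f | ∃ X ∈ S.parts, f = S.superchar X}

end SCT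

/-- The kernel of a character-like function `f : G → ℂ`. -/
def charKer (f : G → ℂ) : Subgroup G where
  carrier := {g | ∀ h, f (g * h) = f h}
  one_mem' := by intro h; simp
  mul_mem' := by intro a b ha hb h; rw [mul_assoc, ha, hb]
  inv_mem' := by
    intro a ha h
    have := ha (a⁻¹ * h)
    rw [mul_inv_cancel_left] at this
    exact this.symm

namespace SCT

/-- `[H,S]`, the subgroup generated by the `g⁻¹k` with `g ∈ H`, `k ∈ Cl_S(g)`. -/
def comm (S : SCT G) (H : Subgroup G) : Subgroup G :=
  Subgroup.closure {x | ∃ g ∈ H, ∃ k ∈ S.cls g, x = g⁻¹ * k}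

/-- `[G,S]`. -/
def derived (S : SCT G) : Subgroup G := S.comm ⊤

/-- `Irr(S | N)`: the `S`-characters whose kernel does not contain `N`. -/
def IrrRel (S : SCT G) (N : Subgroup G) : Set (G → ℂ) :=
  {f | f ∈ S.Irr ∧ ¬ N ≤ charKer f}

/-- `g` is an `S`-Camina element: all of `Irr(S | [G,S])` vanishes at `g`. -/
def IsCaminaElt (S : SCT G) (g : G) : Prop :=
  ∀ f ∈ S.IrrRel S.derived, f g = 0

/-- `N` is `S`-normal: a union of `S`-classes. -/
def IsNormal (S : SCT G) (N : Subgroup G) : Prop :=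
  ∀ g ∈ N, S.cls g ⊆ N

/-- `(G,N)` is a generalised `S`-Camina pair. -/
def IsGCP (S : SCT G) (N : Subgroup G) : Prop :=
  S.IsNormal N ∧ ∀ g : G, g ∉ N → S.IsCaminaElt g

/-- The set `Z(S)` of elements with singleton `S`-class. -/
def centerSet (S : SCT G) : Set G := {g | S.cls g = {g}}

/-- The vanishing-off subgroup `V(S | N)`. -/
def V (S : SCT G) (N : Subgroup G) : Subgroup G :=
  Subgroup.closure {g | ∃ f ∈ S.IrrRel N, f g ≠ 0}

/-- `V(S) = V(S | [G,S])`. -/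
def VS (S : SCT G) : Subgroup G := S.V S.derived

/-- `U(S | N)`: the product of all `S`-normal subgroups `H` with `V(S | H) ≤ N`. -/
def U (S : SCT G) (N : Subgroup G) : Subgroup G :=
  ⨆ (H : Subgroup G) (_ : S.IsNormal H ∧ S.V H ≤ N), H

/-- The upper `S`-central series: `ζ_0 = 1` and `ζ_{i+1}/ζ_i = Z(S^{G/ζ_i})`,
i.e. `ζ_{i+1}` consists of the `g` whose `S`-class maps onto the single coset `gζ_i`. -/
def zeta (S : SCT G) : ℕ → Subgroup G
  | 0 => ⊥
  | i + 1 => Subgroup.closure {g | ∀ k ∈ S.cls g, g⁻¹ * k ∈ S.zeta i}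

/-- The lower `S`-central series `γ_1 = G`, `γ_{i+1} = [γ_i, S]` (with `γ_0 := G`). -/
def gamma (S : SCT G) : ℕ → Subgroup G
  | 0 => ⊤
  | 1 => ⊤
  | n + 2 => S.comm (S.gamma (n + 1))

/-- The series `V_1(S) = V(S)`, `V_{i+1}(S) = [V_i(S), S]` (with `V_0 := V(S)`). -/
def Vseq (S : SCT G) : ℕ → Subgroup G
  | 0 => S.VS
  | 1 => S.VS
  | n + 2 => S.comm (S.Vseq (n + 1))

/-- `G` is a `VZ(S)`-group: every member of `Irr(S | [G,S])` vanishes off `Z(S)`. -/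
def IsVZ (S : SCT G) : Prop :=
  ∀ f ∈ S.IrrRel S.derived, ∀ g : G, g ∉ S.centerSet → f g = 0

end SCT

/-!
Write `N = [G,S]` and `A = cosetSum N`, so `A f (h) = ∑_{z ∈ N} f (h z)`. The supercharacters `σ_X`
are orthogonal and as many as the `S`-classes, so they form a basis of the superclass functions.
In particular `S`-classes are unions of conjugacy classes and `N` is normal, so by Schur's lemma
`A` sends an irreducible `χ` to `|N| χ` or to `0` according as `N ≤ ker χ` or not. As `A σ_X` is
again a superclass function, comparing its coefficients against each `χ ∈ X` shows that all members
of a part behave alike: `A σ_X = |N| σ_X` if `σ_X ∉ Irr(S | N)` and `A σ_X = 0` otherwise. Hence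
`g` is an `S`-Camina element iff `A f (g) = |N| f (g)` for every `σ_X`, i.e. for every superclass
function `f`; for the indicator of `Cl_S(g)` this says exactly that `gN ⊆ Cl_S(g)`.
-/

open Module CategoryTheory

noncomputable def charPairing (χ : G → ℂ) : (G → ℂ) →ₗ[ℂ] ℂ where
  toFun f := ∑ x, f x * χ x⁻¹
  map_add' f f' := by simp only [Pi.add_apply, add_mul, Finset.sum_add_distrib]
  map_smul' c f := by
    simp only [Pi.smul_apply, smul_eq_mul, mul_assoc, Finset.mul_sum, RingHom.id_apply]

lemma charPairing_apply (χ f : G → ℂ) : charPairing χ f = ∑ x, f x * χ x⁻¹ := rfl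

noncomputable def cosetSum (N : Subgroup G) [DecidablePred (· ∈ N)] :
    (G → ℂ) →ₗ[ℂ] (G → ℂ) where
  toFun f h := ∑ z : N, f (h * z)
  map_add' f f' := by ext h; simp only [Pi.add_apply, Finset.sum_add_distrib]
  map_smul' c f := by
    ext h
    simp only [Pi.smul_apply, smul_eq_mul, Finset.mul_sum, RingHom.id_apply]

section cosetSum

variable {N : Subgroup G} [DecidablePred (· ∈ N)]

lemma cosetSum_apply (f : G → ℂ) (h : G) : cosetSum N f h = ∑ z : N, f (h * z) := rfl

lemma cosetSum_apply_eq_of_inv_mul_mem {x y : G} (hxy : x⁻¹ * y ∈ N) (f : G → ℂ) :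
    cosetSum N f y = cosetSum N f x :=
  Fintype.sum_equiv (Equiv.mulLeft ⟨x⁻¹ * y, hxy⟩) _ _ fun z => by simp [mul_assoc]

lemma cosetSum_eq_card_smul_of_le_charKer {f : G → ℂ} (hf : N ≤ charKer f)
    (hcomm : ∀ a b, f (a * b) = f (b * a)) : cosetSum N f = (Fintype.card N : ℂ) • f := by
  ext h
  calc cosetSum N f h = ∑ _z : N, f h :=
        Finset.sum_congr rfl fun z _ => by rw [hcomm]; exact hf z.2 h
    _ = _ := by simp

end cosetSum

namespace IsIrrChar

variable {f f' : G → ℂ}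

lemma map_mul_comm (hf : IsIrrChar G f) (a b : G) : f (a * b) = f (b * a) := by
  obtain ⟨V, -, rfl⟩ := hf
  exact FDRep.char_mul_comm V b a

lemma charPairing_eq (hf : IsIrrChar G f) (hf' : IsIrrChar G f') :
    charPairing f' f = if f = f' then (Fintype.card G : ℂ) else 0 := by
  classical
  obtain ⟨V, hV, rfl⟩ := hf
  obtain ⟨W, hW, rfl⟩ := hf'
  have orth (V W : FDRep ℂ G) [Simple V] [Simple W] :
      charPairing W.character V.character =
        if Nonempty (V ≅ W) then (Fintype.card G : ℂ) else 0 := by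
    have h := FDRep.char_orthonormal V W
    rw [Nat.card_eq_fintype_card,
      inv_mul_eq_iff_eq_mul₀ (Nat.cast_ne_zero.mpr Fintype.card_ne_zero)] at h
    rw [charPairing_apply, h]
    split_ifs <;> simp
  by_cases h : V.character = W.character
  · rw [if_pos h, ← h, orth, if_pos ⟨Iso.refl V⟩]
  · rw [if_neg h, orth, if_neg]
    exact fun ⟨i⟩ => h (FDRep.char_iso i)

lemma exists_map_one_eq_natCast (hf : IsIrrChar G f) : ∃ n : ℕ, 0 < n ∧ f 1 = n := by
  obtain ⟨V, hV, rfl⟩ := id hf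
  refine ⟨finrank ℂ V, Nat.pos_of_ne_zero fun h0 => ?_, FDRep.char_one V⟩
  have : Subsingleton V := finrank_zero_iff.mp h0
  have hzero : V.character = 0 := funext fun x => by
    simp [FDRep.character, Subsingleton.elim (V.ρ x) 0]
  have h := hf.charPairing_eq hf
  simp only [charPairing_apply, hzero, Pi.zero_apply, zero_mul, Finset.sum_const_zero] at h
  exact Fintype.card_ne_zero (by exact_mod_cast h.symm)

lemma map_one_ne_zero (hf : IsIrrChar G f) : f 1 ≠ 0 := by
  obtain ⟨n, hn, h1⟩ := hf.exists_map_one_eq_natCast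
  rw [h1]
  exact Nat.cast_ne_zero.mpr hn.ne'

lemma le_charKer_or_cosetSum_eq_zero (hf : IsIrrChar G f) {N : Subgroup G} [DecidablePred (· ∈ N)]
    (hN : N.Normal) : N ≤ charKer f ∨ cosetSum N f = 0 := by
  obtain ⟨V, hV, rfl⟩ := hf
  set Q : V →ₗ[ℂ] V := ∑ z : N, V.ρ z with hQ
  have hQ_left (z : G) (hz : z ∈ N) : V.ρ z * Q = Q := by
    simp only [hQ, Finset.mul_sum, ← map_mul]
    exact Fintype.sum_equiv (Equiv.mulLeft ⟨z, hz⟩) _ _ fun _ => rfl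
  have hQ_comm (x : G) : V.ρ x * Q = Q * V.ρ x := by
    simp only [hQ, Finset.mul_sum, Finset.sum_mul, ← map_mul]
    exact Fintype.sum_equiv (MulAut.conjNormal x).toEquiv _ _ fun z => by simp [mul_assoc]
  -- Schur's lemma: `Q` is a `G`-endomorphism of the simple `V`, hence a scalar.
  let φ : V ⟶ V := ⟨⟨ModuleCat.ofHom Q⟩, fun x => by ext v; exact congrArg (· v) (hQ_comm x).symm⟩
  obtain ⟨c, hc⟩ := endomorphism_simple_eq_smul_id ℂ φ
  have hQc : Q = c • LinearMap.id := (congrArg (fun φ => φ.hom.hom.hom) hc).symm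
  by_cases hc0 : c = 0
  · right
    ext h
    calc cosetSum N V.character h = LinearMap.trace ℂ V (V.ρ h * Q) := by
          simp only [cosetSum_apply, hQ, Finset.mul_sum, map_sum, FDRep.character, map_mul]
      _ = 0 := by rw [hQc, hc0, zero_smul, mul_zero, map_zero]
  · left
    intro z hz h
    have hρz : V.ρ z = 1 := by
      have := hQ_left z hz
      rw [hQc, mul_smul_comm] at this
      exact smul_right_injective _ hc0 this
    show V.character (z * h) = V.character h
    rw [FDRep.character, map_mul, hρz, one_mul]
    rfl

open Classical in
lemma cosetSum_eq (hf : IsIrrChar G f) {N : Subgroup G} [DecidablePred (· ∈ N)] (hN : N.Normal) :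
    cosetSum N f = (if N ≤ charKer f then (Fintype.card N : ℂ) else 0) • f := by
  split_ifs with h
  · exact cosetSum_eq_card_smul_of_le_charKer h hf.map_mul_comm
  · rw [zero_smul]
    exact (hf.le_charKer_or_cosetSum_eq_zero hN).resolve_left h

end IsIrrChar

namespace SCT

variable (S : SCT G)

def superclassFuns : Submodule ℂ (G → ℂ) where
  carrier := {f | ∀ x y, y ∈ S.cls x → f y = f x}
  add_mem' hf hf' x y hy := by simp only [Pi.add_apply, hf x y hy, hf' x y hy]
  zero_mem' _ _ _ := rfl
  smul_mem' c f hf x y hy := by simp only [Pi.smul_apply, hf x y hy]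

variable {S}

lemma mem_cls_iff {x y : G} : y ∈ S.cls x ↔ S.cls y = S.cls x :=
  ⟨S.cls_eq x y, fun h => h ▸ S.mem_cls y⟩

lemma inv_mul_mem_derived {x y : G} (hy : y ∈ S.cls x) : x⁻¹ * y ∈ S.derived :=
  Subgroup.subset_closure ⟨x, Subgroup.mem_top x, y, hy, rfl⟩

lemma cosetSum_mem_superclassFuns [DecidablePred (· ∈ S.derived)] (f : G → ℂ) :
    cosetSum S.derived f ∈ S.superclassFuns :=
  fun _ _ hy => cosetSum_apply_eq_of_inv_mul_mem (inv_mul_mem_derived hy) f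

lemma indicator_cls_mem_superclassFuns (g : G) : (S.cls g).indicator 1 ∈ S.superclassFuns := by
  intro x y hy
  have hmem : y ∈ S.cls g ↔ x ∈ S.cls g := by rw [mem_cls_iff, mem_cls_iff, S.cls_eq x y hy]
  classical
  show (S.cls g).indicator (1 : G → ℂ) y = (S.cls g).indicator 1 x
  simp only [Set.indicator_apply, hmem, Pi.one_apply]

lemma isIrrChar_of_mem_part {X : Finset (G → ℂ)} (hX : X ∈ S.parts) {χ : G → ℂ} (hχ : χ ∈ X) :
    IsIrrChar G χ :=
  (S.parts_cover χ).mpr ⟨X, hX, hχ⟩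

lemma superchar_eq_sum_smul (X : Finset (G → ℂ)) : S.superchar X = ∑ χ ∈ X, χ 1 • χ := by
  ext
  simp [superchar, Finset.sum_apply]

lemma superchar_mem_superclassFuns {X : Finset (G → ℂ)} (hX : X ∈ S.parts) :
    S.superchar X ∈ S.superclassFuns :=
  S.const X hX

lemma superchar_map_mul_comm {X : Finset (G → ℂ)} (hX : X ∈ S.parts) (a b : G) :
    S.superchar X (a * b) = S.superchar X (b * a) :=
  Finset.sum_congr rfl fun χ hχ => by rw [(isIrrChar_of_mem_part hX hχ).map_mul_comm]

lemma le_charKer_superchar {N : Subgroup G} {X : Finset (G → ℂ)}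
    (hN : ∀ χ ∈ X, N ≤ charKer χ) : N ≤ charKer (S.superchar X) :=
  fun _ hz h => Finset.sum_congr rfl fun χ hχ => by rw [hN χ hχ hz h]

lemma superchar_one_ne_zero {X : Finset (G → ℂ)} (hX : X ∈ S.parts) : S.superchar X 1 ≠ 0 := by
  -- `σ_X(1) = ∑ χ(1)²` is a positive integer.
  have hre : 0 < (S.superchar X 1).re := by
    refine (Complex.re_sum _ _).trans_gt (Finset.sum_pos (fun χ hχ => ?_) (S.parts_nonempty X hX))
    obtain ⟨n, hn, h1⟩ := (isIrrChar_of_mem_part hX hχ).exists_map_one_eq_natCast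
    rw [h1, ← Nat.cast_mul, Complex.natCast_re]
    exact_mod_cast Nat.mul_pos hn hn
  exact fun h => by simp [h] at hre

lemma charPairing_superchar {X : Finset (G → ℂ)} (hX : X ∈ S.parts) {χ : G → ℂ}
    (hχ : IsIrrChar G χ) :
    charPairing χ (S.superchar X) = if χ ∈ X then χ 1 * Fintype.card G else 0 := by
  rw [superchar_eq_sum_smul, map_sum, Finset.sum_congr rfl fun ψ hψ => by
    rw [map_smul, (isIrrChar_of_mem_part hX hψ).charPairing_eq hχ]]
  simp [Finset.sum_ite_eq']

lemma charPairing_sum_smul_superchar (c : S.parts → ℂ) {X : Finset (G → ℂ)} (hX : X ∈ S.parts)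
    {χ : G → ℂ} (hχ : χ ∈ X) :
    charPairing χ (∑ Y : S.parts, c Y • S.superchar Y) = c ⟨X, hX⟩ * (χ 1 * Fintype.card G) := by
  have hirr := isIrrChar_of_mem_part hX hχ
  rw [map_sum, Fintype.sum_eq_single ⟨X, hX⟩, map_smul, charPairing_superchar hX hirr, if_pos hχ,
    smul_eq_mul]
  intro Y hY
  have hχY : χ ∉ (Y : Finset (G → ℂ)) := Finset.disjoint_left.mp
    (S.parts_disj X hX Y Y.2 fun h => hY (Subtype.ext h.symm)) hχ
  rw [map_smul, charPairing_superchar Y.2 hirr, if_neg hχY, smul_zero]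

lemma linearIndependent_superchar : LinearIndependent ℂ fun X : S.parts => S.superchar X := by
  rw [Fintype.linearIndependent_iff]
  intro c hc X
  obtain ⟨χ, hχ⟩ := S.parts_nonempty X X.2
  have h := charPairing_sum_smul_superchar c X.2 hχ
  rw [hc, map_zero, eq_comm] at h
  exact (mul_eq_zero.mp h).resolve_right
    (mul_ne_zero (isIrrChar_of_mem_part X.2 hχ).map_one_ne_zero
      (Nat.cast_ne_zero.mpr Fintype.card_ne_zero))

lemma finrank_superclassFuns_le : finrank ℂ S.superclassFuns ≤ S.parts.card := by
  classical
  -- A superclass function is determined by its values on a set of class representatives.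
  let restrict := (LinearMap.funLeft ℂ ℂ (Set.rangeSplitting S.cls)).comp S.superclassFuns.subtype
  have hinj : Function.Injective restrict := by
    intro f f' h
    ext x
    have hx : x ∈ S.cls (Set.rangeSplitting S.cls ⟨S.cls x, Set.mem_range_self x⟩) := by
      rw [Set.apply_rangeSplitting S.cls]
      exact S.mem_cls x
    rw [f.2 _ _ hx, f'.2 _ _ hx]
    exact congrFun h _
  calc finrank ℂ S.superclassFuns ≤ finrank ℂ (Set.range S.cls → ℂ) :=
        LinearMap.finrank_le_finrank_of_injective hinj
    _ = S.parts.card := by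
        rw [Module.finrank_pi, S.card_eq, Nat.card_eq_fintype_card]

lemma span_superchar :
    Submodule.span ℂ (Set.range fun X : S.parts => S.superchar X) = S.superclassFuns := by
  refine Submodule.eq_of_le_of_finrank_le ?_ ?_
  · rw [Submodule.span_le]
    rintro _ ⟨X, rfl⟩
    exact superchar_mem_superclassFuns X.2
  · rw [finrank_span_eq_card linearIndependent_superchar, Fintype.card_coe]
    exact finrank_superclassFuns_le

lemma exists_sum_smul_superchar_eq {f : G → ℂ} (hf : f ∈ S.superclassFuns) :
    ∃ c : S.parts → ℂ, ∑ X, c X • S.superchar X = f := by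
  rwa [← span_superchar, Submodule.mem_span_range_iff_exists_fun] at hf

lemma map_mul_comm_of_mem_superclassFuns {f : G → ℂ} (hf : f ∈ S.superclassFuns) (a b : G) :
    f (a * b) = f (b * a) := by
  rw [← span_superchar] at hf
  induction hf using Submodule.span_induction with
  | mem _ h => obtain ⟨X, rfl⟩ := h; exact superchar_map_mul_comm X.2 a b
  | zero => rfl
  | add f f' _ _ hf hf' => simp only [Pi.add_apply, hf, hf']
  | smul c f _ hf => simp only [Pi.smul_apply, hf]

lemma conj_mem_cls {x y : G} (hy : y ∈ S.cls x) (g : G) : g * y * g⁻¹ ∈ S.cls (g * x * g⁻¹) := by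
  set δ := (S.cls (g * x * g⁻¹)).indicator (1 : G → ℂ)
  have hδ : δ ∈ S.superclassFuns := indicator_cls_mem_superclassFuns _
  have hconj (w : G) : δ (g * w * g⁻¹) = δ w := by
    rw [mul_assoc, map_mul_comm_of_mem_superclassFuns hδ, inv_mul_cancel_right]
  have h1 : δ (g * y * g⁻¹) = 1 := by
    rw [hconj, hδ x y hy, ← hconj]
    exact Set.indicator_of_mem (S.mem_cls _) 1
  by_contra h
  exact zero_ne_one ((Set.indicator_of_notMem h 1).symm.trans h1)

lemma derived_normal : S.derived.Normal := by
  refine Subgroup.normalizer_eq_top_iff.mp (eq_top_iff.mpr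
    (Subgroup.le_normalizer_closure_iff.mpr fun g _ w hw => Subgroup.subset_closure ?_))
  obtain ⟨x, -, y, hy, rfl⟩ := hw
  exact ⟨g * x * g⁻¹, Subgroup.mem_top _, g * y * g⁻¹, conj_mem_cls hy g, by group⟩

lemma derived_le_charKer_of_mem_part {X : Finset (G → ℂ)} (hX : X ∈ S.parts) {χ χ' : G → ℂ}
    (hχ : χ ∈ X) (hχ' : χ' ∈ X) (hker : S.derived ≤ charKer χ) : S.derived ≤ charKer χ' := by
  classical
  obtain ⟨c, hc⟩ := exists_sum_smul_superchar_eq (cosetSum_mem_superclassFuns (S.superchar X))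
  have hcoeff (ψ : G → ℂ) (hψ : ψ ∈ X) :
      c ⟨X, hX⟩ = if S.derived ≤ charKer ψ then (Fintype.card S.derived : ℂ) else 0 := by
    have hirr := isIrrChar_of_mem_part hX hψ
    have h := charPairing_sum_smul_superchar c hX hψ
    rw [hc, superchar_eq_sum_smul, map_sum, map_sum, Finset.sum_congr rfl fun φ hφ => by
      rw [map_smul, (isIrrChar_of_mem_part hX hφ).cosetSum_eq derived_normal, map_smul, map_smul,
        (isIrrChar_of_mem_part hX hφ).charPairing_eq hirr]] at h
    simp only [smul_eq_mul, mul_ite, mul_zero, Finset.sum_ite_eq', if_pos hψ] at h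
    refine mul_right_cancel₀ (mul_ne_zero hirr.map_one_ne_zero
      (Nat.cast_ne_zero.mpr Fintype.card_ne_zero)) (h.symm.trans ?_)
    ring
  have h := (hcoeff χ hχ).symm.trans (hcoeff χ' hχ')
  rw [if_pos hker] at h
  by_contra hker'
  rw [if_neg hker'] at h
  exact Fintype.card_ne_zero (Nat.cast_eq_zero.mp h)

section derived

variable [DecidablePred (· ∈ S.derived)]

open Classical in
lemma cosetSum_superchar {X : Finset (G → ℂ)} (hX : X ∈ S.parts) :
    cosetSum S.derived (S.superchar X) =
      if S.derived ≤ charKer (S.superchar X) then (Fintype.card S.derived : ℂ) • S.superchar X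
      else 0 := by
  obtain ⟨χ₀, hχ₀⟩ := S.parts_nonempty X hX
  by_cases hker : S.derived ≤ charKer χ₀
  · have hσ := le_charKer_superchar (S := S) fun χ hχ =>
      derived_le_charKer_of_mem_part hX hχ₀ hχ hker
    rw [if_pos hσ]
    exact cosetSum_eq_card_smul_of_le_charKer hσ (superchar_map_mul_comm hX)
  · have h0 : cosetSum S.derived (S.superchar X) = 0 := by
      rw [superchar_eq_sum_smul, map_sum]
      refine Finset.sum_eq_zero fun χ hχ => ?_
      rw [map_smul, (isIrrChar_of_mem_part hX hχ).cosetSum_eq derived_normal,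
        if_neg fun h => hker (derived_le_charKer_of_mem_part hX hχ hχ₀ h), zero_smul, smul_zero]
    rw [h0, if_neg]
    intro hσ
    have h1 := congrFun (cosetSum_eq_card_smul_of_le_charKer hσ (superchar_map_mul_comm hX)) 1
    rw [h0, Pi.zero_apply, Pi.smul_apply, smul_eq_mul, eq_comm] at h1
    exact mul_ne_zero (Nat.cast_ne_zero.mpr Fintype.card_ne_zero) (superchar_one_ne_zero hX) h1

lemma isCaminaElt_iff_forall_cosetSum_superchar (g : G) :
    S.IsCaminaElt g ↔ ∀ X ∈ S.parts,
      cosetSum S.derived (S.superchar X) g = Fintype.card S.derived * S.superchar X g := by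
  have hcard : (Fintype.card S.derived : ℂ) ≠ 0 := Nat.cast_ne_zero.mpr Fintype.card_ne_zero
  constructor
  · intro hcam X hX
    rw [cosetSum_superchar hX]
    split_ifs with hker
    · rfl
    · rw [hcam _ ⟨⟨X, hX, rfl⟩, hker⟩, Pi.zero_apply, mul_zero]
  · rintro h _ ⟨⟨X, hX, rfl⟩, hker⟩
    have hg := h X hX
    rw [cosetSum_superchar hX, if_neg hker, Pi.zero_apply, eq_comm] at hg
    exact (mul_eq_zero.mp hg).resolve_left hcard

end derived

section cosetSum

variable {N : Subgroup G} [DecidablePred (· ∈ N)]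

lemma forall_cosetSum_superchar_iff (g : G) :
    (∀ X ∈ S.parts, cosetSum N (S.superchar X) g = Fintype.card N * S.superchar X g) ↔
      ∀ f ∈ S.superclassFuns, cosetSum N f g = Fintype.card N * f g := by
  refine ⟨fun h f hf => ?_, fun h X hX => h _ (superchar_mem_superclassFuns hX)⟩
  rw [← span_superchar] at hf
  refine LinearMap.eqOn_span' (f := (LinearMap.proj g).comp (cosetSum N))
    (g := (Fintype.card N : ℂ) • LinearMap.proj g) ?_ hf
  rintro _ ⟨X, rfl⟩
  exact h X X.2

lemma forall_cosetSum_superclassFun_iff (g : G) :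
    (∀ f ∈ S.superclassFuns, cosetSum N f g = Fintype.card N * f g) ↔ ∀ z ∈ N, g * z ∈ S.cls g := by
  classical
  refine ⟨fun h => ?_, fun h f hf => ?_⟩
  · have hcount := h _ (indicator_cls_mem_superclassFuns g)
    rw [cosetSum_apply, Set.indicator_of_mem (S.mem_cls g), Pi.one_apply, mul_one] at hcount
    simp only [Set.indicator_apply, Pi.one_apply, Finset.sum_boole] at hcount
    have hall := Finset.card_filter_eq_iff.mp (Nat.cast_injective hcount)
    exact fun z hz => hall ⟨z, hz⟩ (Finset.mem_univ _)
  · rw [cosetSum_apply]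
    calc ∑ z : N, f (g * z) = ∑ _z : N, f g := Finset.sum_congr rfl fun z _ => hf _ _ (h z z.2)
      _ = _ := by simp

end cosetSum

end SCT

/-- `g` is an `S`-Camina element iff every `z ∈ [G,S]` is of the form
`g⁻¹y` with `y ∈ Cl_S(g)`. -/
theorem caminaElt_iff_forall_exists (S : SCT G) (g : G) :
    S.IsCaminaElt g ↔ ∀ z ∈ S.derived, ∃ y ∈ S.cls g, g⁻¹ * y = z := by
  classical
  rw [SCT.isCaminaElt_iff_forall_cosetSum_superchar, SCT.forall_cosetSum_superchar_iff,
    SCT.forall_cosetSum_superclassFun_iff]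
  refine forall₂_congr fun z _ => ⟨fun h => ⟨g * z, h, inv_mul_cancel_left g z⟩, ?_⟩
  rintro ⟨y, hy, rfl⟩
  rwa [mul_inv_cancel_left]
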